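/- arXiv:2304.06318 — 2 statements merged into one kernel-verified Lean document; each statement's English description precedes it below -/
import Mathlib

section
/- Let G be a finite connected graph with set of blocks 𝓑 and let (𝓘, α) be an independent blocks inequality. Then ∑_{B∈𝓑} α_B x_B ≤ 1 holds for every x ∈ CBP(G); that is, every independent blocks inequality is a valid inequality for CBP(G). -/
open Set

noncomputable section

namespace ConnectedBlocksPaper

variable {V : Type} [Fintype V] [DecidableEq V]

/-- A subgraph is 2-connected: at least 3 vertices and removing any vertex keeps it connected. -/
def IsTwoConnectedSub (G : SimpleGraph V) (H : G.Subgraph) : Prop :=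
  3 ≤ H.verts.ncard ∧ ∀ v ∈ H.verts, (H.deleteVerts {v}).Connected

/-- A block of `G`: a maximal 2-connected subgraph, or a bridge together with its two
incident vertices. -/
def IsBlock (G : SimpleGraph V) (B : G.Subgraph) : Prop :=
  (IsTwoConnectedSub G B ∧ ∀ B' : G.Subgraph, IsTwoConnectedSub G B' → B ≤ B' → B' = B)
  ∨ (∃ (u v : V) (h : G.Adj u v), G.IsBridge s(u, v) ∧ B = G.subgraphOfAdj h)

/-- The set `𝓑` of blocks of `G`, as a type. -/
abbrev Block (G : SimpleGraph V) := {B : G.Subgraph // IsBlock G B}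

/-- The subgraph `G[𝓐]` induced by a set of blocks. -/
def blockUnion (G : SimpleGraph V) (𝓐 : Set (Block G)) : G.Subgraph :=
  ⨆ B ∈ 𝓐, (B : G.Subgraph)

/-- `G[𝓐]` is connected (the empty set of blocks counts as connected). -/
def ConnBlocks (G : SimpleGraph V) (𝓐 : Set (Block G)) : Prop :=
  𝓐 = ∅ ∨ (blockUnion G 𝓐).Connected

/-- The incidence vector `χ^𝓐 ∈ {0,1}^𝓑` of a set of blocks `𝓐 ⊆ 𝓑`. -/
def incVec (G : SimpleGraph V) (𝓐 : Set (Block G)) : Block G → ℝ :=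
  Set.indicator 𝓐 1

/-- The connected blocks polytope `CBP(G) ⊆ ℝ^𝓑`. -/
def CBP (G : SimpleGraph V) : Set (Block G → ℝ) :=
  convexHull ℝ {x | ∃ 𝓐 : Set (Block G), ConnBlocks G 𝓐 ∧ x = incVec G 𝓐}

/-- `F` is a face of the convex set `P`. -/
def IsFaceOf {E : Type*} [AddCommGroup E] [Module ℝ E] (P F : Set E) : Prop :=
  F ⊆ P ∧ Convex ℝ F ∧
    ∀ x ∈ P, ∀ y ∈ P, ∀ t : ℝ, 0 < t → t < 1 →
      t • x + (1 - t) • y ∈ F → x ∈ F ∧ y ∈ F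

/-- The dimension of a polytope: the dimension of its affine hull. -/
def polyDim {E : Type*} [AddCommGroup E] [Module ℝ E] (P : Set E) : ℕ :=
  Module.finrank ℝ (affineSpan ℝ P).direction

/-- A facet is a face of dimension `dim P - 1`. -/
def IsFacetOf {E : Type*} [AddCommGroup E] [Module ℝ E] (P F : Set E) : Prop :=
  IsFaceOf P F ∧ polyDim F = polyDim P - 1

/-- `v` is a cut vertex of `G`: deleting `v` from the connected graph `G` leaves more than
one component. -/
def IsCutVertex (G : SimpleGraph V) (v : V) : Prop :=
  ¬ (G.induce ({v}ᶜ : Set V)).Preconnected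

/-- `𝓑⟨𝓐⟩`: the smallest set of blocks inducing a connected subgraph and containing `𝓐`. -/
def blockClosure (G : SimpleGraph V) (𝓐 : Set (Block G)) : Set (Block G) :=
  ⋂₀ {𝓒 : Set (Block G) | 𝓐 ⊆ 𝓒 ∧ ConnBlocks G 𝓒}

/-- An independent set of blocks: no two blocks share a common vertex. -/
def IndepBlocks (G : SimpleGraph V) (𝓘 : Set (Block G)) : Prop :=
  ∀ B₁ ∈ 𝓘, ∀ B₂ ∈ 𝓘, B₁ ≠ B₂ →
    ((B₁ : G.Subgraph).verts ∩ (B₂ : G.Subgraph).verts) = ∅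

/-- `(𝓘, α)` is an independent blocks inequality. -/
def IsIBI (G : SimpleGraph V) (𝓘 : Set (Block G)) (α : Block G → ℤ) : Prop :=
  IndepBlocks G 𝓘 ∧
  (∀ B, B ∉ blockClosure G 𝓘 → α B = 0) ∧
  (∀ B ∈ 𝓘, α B = 1) ∧
  (∀ B ∈ blockClosure G 𝓘 \ 𝓘, α B ≤ 0) ∧
  (∑ᶠ B ∈ blockClosure G 𝓘 \ 𝓘, α B = -((𝓘.ncard : ℤ) - 1)) ∧
  (∀ I ⊆ 𝓘, ∑ᶠ B ∈ blockClosure G I \ 𝓘, α B ≤ -((I.ncard : ℤ) - 1))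

/-- `𝓑[H]`: the set of blocks (of `G`) of the subgraph `H`. -/
def blocksOf (G : SimpleGraph V) (H : G.Subgraph) : Set (Block G) :=
  {B : Block G | (B : G.Subgraph) ≤ H}

/-- `𝒦_v`: the components of `G - v` with `v` (and its incident edges) added back. -/
def Kv (G : SimpleGraph V) (v : V) : Set G.Subgraph :=
  {H | ∃ C : (G.induce ({v}ᶜ : Set V)).ConnectedComponent,
        H = (⊤ : G.Subgraph).induce (Subtype.val '' C.supp ∪ {v})}

/-- A polytope is simple if every vertex lies in exactly `dim P` facets. -/
def IsSimplePolytope {E : Type*} [AddCommGroup E] [Module ℝ E] (P : Set E) : Prop :=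
  ∀ x ∈ P.extremePoints ℝ, {F : Set E | IsFacetOf P F ∧ x ∈ F}.ncard = polyDim P

/-- A simplex: the convex hull of an affinely independent finite set. -/
def IsSimplex {E : Type*} [AddCommGroup E] [Module ℝ E] (F : Set E) : Prop :=
  ∃ s : Finset E, AffineIndependent ℝ ((↑) : s → E) ∧ F = convexHull ℝ (s : Set E)

/-- A polytope is simplicial if every facet is a simplex. -/
def IsSimplicialPolytope {E : Type*} [AddCommGroup E] [Module ℝ E] (P : Set E) : Prop :=
  ∀ F : Set E, IsFacetOf P F → IsSimplex F

/-- The graph of a polytope: extreme points, adjacent when they span a 1-dimensional face. -/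
def polyGraph {E : Type*} [AddCommGroup E] [Module ℝ E] (P : Set E) : SimpleGraph E where
  Adj x y := x ≠ y ∧ x ∈ P.extremePoints ℝ ∧ y ∈ P.extremePoints ℝ ∧
    IsFaceOf P (segment ℝ x y) ∧ polyDim (segment ℝ x y) = 1
  symm := ⟨by
    rintro x y ⟨hxy, hx, hy, hF, hd⟩
    exact ⟨hxy.symm, hy, hx, by rwa [segment_symm], by rwa [segment_symm]⟩⟩
  loopless := ⟨by rintro x ⟨h, -⟩; exact h rfl⟩

end ConnectedBlocksPaper

lemma dotProduct_le_of_mem_convexHull {ι : Type*} [Fintype ι] (a : ι → ℝ) {S : Set (ι → ℝ)}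
    {c : ℝ} (hS : ∀ y ∈ S, a ⬝ᵥ y ≤ c) {x : ι → ℝ} (hx : x ∈ convexHull ℝ S) : a ⬝ᵥ x ≤ c :=
  convexHull_min hS (convex_halfSpace_le ⟨dotProduct_add a, fun r v => dotProduct_smul r a v⟩ c) hx

lemma dotProduct_indicator_one {ι R : Type*} [Fintype ι] [NonAssocSemiring R] (a : ι → R)
    (s : Set ι) : a ⬝ᵥ s.indicator 1 = ∑ᶠ i ∈ s, a i := by
  rw [finsum_mem_def, finsum_eq_sum_of_fintype]
  exact Finset.sum_congr rfl fun i _ => by by_cases hi : i ∈ s <;> simp [hi]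

namespace ConnectedBlocksPaper

variable {V : Type}

lemma blockClosure_subset {G : SimpleGraph V} {𝓐 𝓒 : Set (Block G)}
    (h𝓐 : 𝓐 ⊆ 𝓒) (h𝓒 : ConnBlocks G 𝓒) : blockClosure G 𝓐 ⊆ 𝓒 :=
  sInter_subset_of_mem ⟨h𝓐, h𝓒⟩

namespace IsIBI

variable {G : SimpleGraph V} {𝓘 : Set (Block G)} {α : Block G → ℤ}

lemma nonpos_of_notMem (h : IsIBI G 𝓘 α) {B : Block G} (hB : B ∉ 𝓘) : α B ≤ 0 := by
  obtain ⟨-, hzero, -, hnonpos, -, -⟩ := h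
  by_cases hB' : B ∈ blockClosure G 𝓘
  · exact hnonpos B ⟨hB', hB⟩
  · exact (hzero B hB').le

/-- With `I = 𝓐 ∩ 𝓘`, the blocks of `𝓐` in `𝓘` contribute `|I|`; since `𝓑⟨I⟩ ⊆ 𝓐` and `α ≤ 0`
off `𝓘`, the others contribute at most `∑_{𝓑⟨I⟩ ∖ 𝓘} α ≤ -(|I| - 1)`. -/
lemma finsum_mem_le_one [Finite V] (h : IsIBI G 𝓘 α) {𝓐 : Set (Block G)}
    (h𝓐 : ConnBlocks G 𝓐) : ∑ᶠ B ∈ 𝓐, α B ≤ 1 := by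
  set I := 𝓐 ∩ 𝓘
  have hclosure : blockClosure G I \ 𝓘 ⊆ 𝓐 \ 𝓘 :=
    sdiff_subset_sdiff_left (blockClosure_subset inter_subset_left h𝓐)
  have hrest : ∑ᶠ B ∈ 𝓐 \ 𝓘, α B ≤ ∑ᶠ B ∈ blockClosure G I \ 𝓘, α B := by
    rw [← finsum_mem_add_sdiff hclosure (toFinite _)]
    have : ∑ᶠ B ∈ (𝓐 \ 𝓘) \ (blockClosure G I \ 𝓘), α B ≤ 0 :=
      finsum_mem_induction (· ≤ 0) le_rfl (fun _ _ => add_nonpos)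
        fun B hB => h.nonpos_of_notMem hB.1.2
    linarith
  obtain ⟨-, -, hone, -, -, hsub⟩ := h
  have hI : ∑ᶠ B ∈ I, α B = I.ncard := by
    rw [finsum_mem_congr rfl fun B hB => hone B hB.2, ← finsum_one,
      Nat.cast_finsum_mem (toFinite I), Nat.cast_one]
  have hbound := hsub I inter_subset_right
  rw [← finsum_mem_inter_add_sdiff 𝓘 (toFinite 𝓐)]
  linarith

end IsIBI

variable [Fintype V] [DecidableEq V]

theorem ibi_valid_general (G : SimpleGraph V)
    (𝓘 : Set (Block G)) (α : Block G → ℤ) (h : IsIBI G 𝓘 α) :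
    ∀ x ∈ CBP G, ∑ᶠ B : Block G, (α B : ℝ) * x B ≤ 1 := by
  have := Fintype.ofFinite (Block G)
  intro x hx
  rw [finsum_eq_sum_of_fintype]
  refine dotProduct_le_of_mem_convexHull _ ?_ hx
  rintro _ ⟨𝓐, h𝓐, rfl⟩
  calc _ = ∑ᶠ B ∈ 𝓐, (α B : ℝ) := dotProduct_indicator_one _ 𝓐
    _ = ((∑ᶠ B ∈ 𝓐, α B : ℤ) : ℝ) := ((Int.castAddHom ℝ).map_finsum_mem α (toFinite 𝓐)).symm
    _ ≤ 1 := mod_cast h.finsum_mem_le_one h𝓐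

/-- every independent blocks inequality is valid on `CBP(G)`. -/
theorem ibi_valid (G : SimpleGraph V) (hG : G.Connected)
    (𝓘 : Set (Block G)) (α : Block G → ℤ) (h : IsIBI G 𝓘 α) :
    ∀ x ∈ CBP G, ∑ᶠ B : Block G, (α B : ℝ) * x B ≤ 1 :=
  ibi_valid_general G 𝓘 α h

end ConnectedBlocksPaper
end
end

section
/- Let G be a finite connected graph with set of blocks 𝓑, and let ∅ ≠ 𝓐 ⊆ 𝓑 be such that G[𝓐] is connected. Then {0, χ^𝓐} is an edge (a 1-dimensional face) of CBP(G) if and only if |𝓐| = 1. -/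
/-!
All coordinates of points of `CBP(G)` lie in `[0, 1]`. Hence for a single block `B` the points
of `CBP(G)` vanishing outside `B` form a face, and since a block is connected this face is
exactly the segment `[0, χ^B]`. If `𝓐` has `n ≥ 2` blocks, then `χ^𝓐 / n` lies on `[0, χ^𝓐]`
and is also the barycentre of the vertices `χ^B`, `B ∈ 𝓐`; grouping it as
`(1/n) χ^{B₁} + (1 - 1/n) (barycentre of the others)` shows that a face containing the segment
would contain `χ^{B₁}`, which is not on it.
-/

open Set

noncomputable section

namespace ConnectedBlocksPaper

section Convex

variable {E : Type*} [AddCommGroup E] [Module ℝ E]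

theorem mem_segment_zero_iff {x v : E} :
    x ∈ segment ℝ 0 v ↔ ∃ t ∈ Icc (0 : ℝ) 1, t • v = x := by
  simp [segment_eq_image']

theorem polyDim_segment {x y : E} (hxy : x ≠ y) : polyDim (segment ℝ x y) = 1 := by
  rw [polyDim, ← convexHull_pair, affineSpan_convexHull, direction_affineSpan, vectorSpan_pair]
  exact finrank_span_singleton (vsub_ne_zero.mpr hxy)

theorem isFaceOf_setOf_apply_eq_zero {ι : Type*} {P : Set (ι → ℝ)} (hP : Convex ℝ P)
    (hP₀ : ∀ z ∈ P, ∀ i, 0 ≤ z i) (S : Set ι) :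
    IsFaceOf P {z ∈ P | ∀ i ∈ S, z i = 0} := by
  refine ⟨fun z hz => hz.1, ?_, ?_⟩
  · intro x hx y hy a b ha hb hab
    exact ⟨hP hx.1 hy.1 ha hb hab, fun i hi => by simp [hx.2 i hi, hy.2 i hi]⟩
  · intro p hp q hq t ht₀ ht₁ hpq
    have hzero : ∀ i ∈ S, t * p i = 0 ∧ (1 - t) * q i = 0 := fun i hi =>
      (add_eq_zero_iff_of_nonneg (mul_nonneg ht₀.le (hP₀ p hp i))
        (mul_nonneg (sub_nonneg.mpr ht₁.le) (hP₀ q hq i))).mp (by simpa using hpq.2 i hi)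
    exact ⟨⟨hp, fun i hi => (mul_eq_zero.mp (hzero i hi).1).resolve_left ht₀.ne'⟩,
      ⟨hq, fun i hi => (mul_eq_zero.mp (hzero i hi).2).resolve_left (sub_ne_zero.mpr ht₁.ne')⟩⟩

end Convex

variable {V : Type}

theorem IsTwoConnectedSub.connected {G : SimpleGraph V} {H : G.Subgraph}
    (hH : IsTwoConnectedSub G H) : H.Connected := by
  obtain ⟨hcard, hdel⟩ := hH
  rw [SimpleGraph.Subgraph.connected_iff_forall_exists_walk_subgraph]
  refine ⟨nonempty_of_ncard_ne_zero (by omega), fun {u w} hu hw => ?_⟩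
  have hpair : ({u, w} : Set V).ncard < H.verts.ncard := by
    have hle := ncard_insert_le u {w}
    rw [ncard_singleton] at hle
    omega
  obtain ⟨x, hx, hxuw⟩ := exists_mem_notMem_of_ncard_lt_ncard hpair
  have hmem : ∀ y ∈ H.verts, y ∈ ({u, w} : Set V) → y ∈ (H.deleteVerts {x}).verts :=
    fun y hy hyuw => ⟨hy, fun hyx => hxuw (hyx ▸ hyuw)⟩
  obtain ⟨p, hp⟩ := ((SimpleGraph.Subgraph.connected_iff_forall_exists_walk_subgraph _).mp
    (hdel x hx)).2 (hmem u hu (by simp)) (hmem w hw (by simp))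
  exact ⟨p, hp.trans SimpleGraph.Subgraph.deleteVerts_le⟩

theorem IsBlock.connected {G : SimpleGraph V} {B : G.Subgraph} (hB : IsBlock G B) :
    B.Connected := by
  rcases hB with ⟨h2, -⟩ | ⟨u, v, huv, -, rfl⟩
  · exact h2.connected
  · exact SimpleGraph.Subgraph.subgraphOfAdj_connected huv

section

variable {G : SimpleGraph V}

theorem convex_CBP : Convex ℝ (CBP G) := convex_convexHull ℝ _

theorem zero_mem_CBP : (0 : Block G → ℝ) ∈ CBP G :=
  subset_convexHull ℝ _ ⟨∅, Or.inl rfl, (indicator_empty' _).symm⟩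

theorem incVec_singleton_ne_zero (B : Block G) : incVec G {B} ≠ 0 := fun h => by
  simpa [incVec] using congrFun h B

theorem incVec_singleton_mem_CBP (B : Block G) : incVec G {B} ∈ CBP G := by
  refine subset_convexHull ℝ _ ⟨{B}, Or.inr ?_, rfl⟩
  simpa [blockUnion] using B.2.connected

theorem CBP_subset_pi_Icc : CBP G ⊆ univ.pi fun _ => Icc 0 1 := by
  refine convexHull_min ?_ (convex_pi fun _ _ => convex_Icc 0 1)
  rintro _ ⟨𝓐, -, rfl⟩ B -
  by_cases hB : B ∈ 𝓐 <;> simp [incVec, hB]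

theorem incVec_eq_sum_singleton (s : Finset (Block G)) :
    incVec G s = ∑ B ∈ s, incVec G {B} := by
  classical
  ext B
  simp [incVec, indicator_apply, Finset.sum_apply]

theorem inv_card_smul_incVec_mem_CBP {s : Finset (Block G)} (hs : s.Nonempty) :
    (s.card : ℝ)⁻¹ • incVec G s ∈ CBP G := by
  have := convex_CBP.centerMass_mem (t := s) (w := fun _ => 1) (fun _ _ => zero_le_one)
    (by simpa using hs) (fun B _ => incVec_singleton_mem_CBP B)
  simpa [Finset.centerMass, incVec_eq_sum_singleton] using this

theorem incVec_singleton_notMem_segment {𝓐 : Set (Block G)} {B₁ B₂ : Block G}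
    (h₁ : B₁ ∈ 𝓐) (h₂ : B₂ ∈ 𝓐) (h : B₂ ≠ B₁) :
    incVec G {B₁} ∉ segment ℝ 0 (incVec G 𝓐) := by
  rintro hmem
  obtain ⟨t, -, ht⟩ := mem_segment_zero_iff.mp hmem
  have ht₁ := congrFun ht B₁
  have ht₂ := congrFun ht B₂
  simp [incVec, h₁, h₂, h] at ht₁ ht₂
  simp [ht₁] at ht₂

theorem not_isFaceOf_segment_zero_incVec {s : Finset (Block G)} (hs : 1 < s.card) :
    ¬ IsFaceOf (CBP G) (segment ℝ 0 (incVec G s)) := by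
  classical
  intro hF
  obtain ⟨B₁, h₁, B₂, h₂, h₁₂⟩ := Finset.one_lt_card.mp hs
  have hr : B₂ ∈ s.erase B₁ := Finset.mem_erase.mpr ⟨h₁₂.symm, h₂⟩
  have hn : (1 : ℝ) < s.card := by exact_mod_cast hs
  have hrn : ((s.erase B₁).card : ℝ) = s.card - 1 := by
    rw [eq_sub_iff_add_eq]
    exact_mod_cast Finset.card_erase_add_one h₁
  set r := s.erase B₁
  set n : ℝ := (s.card : ℝ)
  have hsplit : n⁻¹ • incVec G s =
      n⁻¹ • incVec G {B₁} + (1 - n⁻¹) • ((r.card : ℝ)⁻¹ • incVec G r) := by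
    rw [incVec_eq_sum_singleton, incVec_eq_sum_singleton, ← Finset.add_sum_erase s _ h₁, smul_add,
      smul_smul, hrn]
    congr 2
    field_simp [(by linarith : n - 1 ≠ 0)]
  have hmid : n⁻¹ • incVec G s ∈ segment ℝ 0 (incVec G s) :=
    mem_segment_zero_iff.mpr ⟨n⁻¹, ⟨by positivity, inv_le_one_of_one_le₀ hn.le⟩, rfl⟩
  exact incVec_singleton_notMem_segment (Finset.mem_coe.2 h₁) (Finset.mem_coe.2 h₂) h₁₂.symm
    (hF.2.2 _ (incVec_singleton_mem_CBP B₁) _ (inv_card_smul_incVec_mem_CBP ⟨B₂, hr⟩) n⁻¹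
      (by positivity) (inv_lt_one_of_one_lt₀ hn) (hsplit ▸ hmid)).1

theorem setOf_mem_CBP_apply_eq_zero_eq_segment (B₀ : Block G) :
    {z ∈ CBP G | ∀ B ∈ ({B₀}ᶜ : Set (Block G)), z B = 0} = segment ℝ 0 (incVec G {B₀}) := by
  ext z
  rw [mem_segment_zero_iff]
  constructor
  · rintro ⟨hz, hz₀⟩
    refine ⟨z B₀, CBP_subset_pi_Icc hz B₀ (mem_univ _), funext fun B => ?_⟩
    by_cases hB : B = B₀
    · simp [incVec, hB]
    · simp [incVec, hB, hz₀ B hB]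
  · rintro ⟨t, ht, rfl⟩
    refine ⟨convex_CBP.smul_mem_of_zero_mem zero_mem_CBP (incVec_singleton_mem_CBP B₀) ht,
      fun B hB => by simp_all [incVec]⟩

end

variable [Fintype V] [DecidableEq V]

theorem cbp_edge_origin_iff_general (G : SimpleGraph V)
    (𝓐 : Set (Block G)) (hne : 𝓐 ≠ ∅) :
    (IsFaceOf (CBP G) (segment ℝ 0 (incVec G 𝓐)) ∧
        polyDim (segment ℝ 0 (incVec G 𝓐)) = 1) ↔ 𝓐.ncard = 1 := by
  obtain ⟨s, rfl⟩ := (toFinite 𝓐).exists_finset_coe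
  have hs : s.Nonempty := by simpa [Finset.nonempty_iff_ne_empty] using hne
  rw [ncard_coe_finset]
  constructor
  · rintro ⟨hF, -⟩
    by_contra h1
    exact not_isFaceOf_segment_zero_incVec (by have := hs.card_pos; omega) hF
  · intro h1
    obtain ⟨B₀, rfl⟩ := Finset.card_eq_one.mp h1
    rw [Finset.coe_singleton]
    refine ⟨?_, polyDim_segment (incVec_singleton_ne_zero B₀).symm⟩
    rw [← setOf_mem_CBP_apply_eq_zero_eq_segment]
    exact isFaceOf_setOf_apply_eq_zero convex_CBP
      (fun z hz B => (CBP_subset_pi_Icc hz B (mem_univ B)).1) _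

/-- for `∅ ≠ 𝓐 ⊆ 𝓑` with `G[𝓐]` connected, `{0, χ^𝓐}` is an edge of
`CBP(G)` iff `|𝓐| = 1`. -/
theorem cbp_edge_origin_iff (G : SimpleGraph V) (hG : G.Connected)
    (𝓐 : Set (Block G)) (hne : 𝓐 ≠ ∅) (hc : ConnBlocks G 𝓐) :
    (IsFaceOf (CBP G) (segment ℝ 0 (incVec G 𝓐)) ∧
        polyDim (segment ℝ 0 (incVec G 𝓐)) = 1) ↔ 𝓐.ncard = 1 :=
  cbp_edge_origin_iff_general G 𝓐 hne

end ConnectedBlocksPaper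
end
end
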